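/- arXiv:1103.1034 — 2 statements merged into one kernel-verified Lean document; each statement's English description precedes it below -/
import Mathlib

section
/- Let f belong to CW²_Δ[−1,1] with constant M₂, and set L = (γ²M₂/π)·(1 + π√2/(γ·ln N)) and L₁ = M₂γ²/(8π). Then for every z ∈ ℂ with |Re z| > 1, the remainder R*_N(f,z) = Φ(f − S_N, z) satisfies |R*_N(f,z)| ≤ √((L·ln N)² + L₁²)/N². -/
open Real MeasureTheory Filter Topology

open Set intervalIntegral

/-!
On each grid cell the linear interpolant of a function whose derivative is `M`-Lipschitz is within
`M h² / 8` of it: at `u` the interpolation error is, up to sign, a convex combination of the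
one-sided Taylor remainders `f a - f u - (a - u) f'(u)` and `f b - f u - (b - u) f'(u)`, which a
mean value inequality bounds by `M (u - a)² / 2` and `M (b - u)² / 2`.
Hence `|f - S| ≤ M₂ γ² / (8 N²)` on `[-1, 1]`.

For the transform, let `c = ±(|Re z| + |Im z|)` carry the sign of `Re z`. On `[-1, 1]` we have
`|c - u| ≤ √2 |u - z|`, while `|√(z² - 1)| = √(|z - 1| |z + 1|) ≤ √(c² - 1)`, and
`∫ du / (|c - u| √(1 - u²)) = π / √(c² - 1)` (an antiderivative is `arcsin ((c u - 1) / (c - u))`).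
The two factors cancel, so `|Φ(g, z)| ≤ √2 sup |g|`. Finally `√2 π ≤ 8` and `log N ≥ 1` give
the stated constant.
-/

lemma abs_sub_sub_mul_le_of_deriv_boundary {f g B B' : ℝ → ℝ} {p q c : ℝ} (hpq : p ≤ q)
    (hf : ∀ s ∈ Icc p q, HasDerivWithinAt f (g s) (Icc p q) s)
    (hB : ∀ s, HasDerivAt B (B' s) s) (hBp : B p = 0)
    (hbound : ∀ s ∈ Icc p q, |g s - c| ≤ B' s) :
    |f q - f p - (q - p) * c| ≤ B q := by
  have hderiv : ∀ s ∈ Icc p q,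
      HasDerivWithinAt (fun s ↦ f s - f p - (s - p) * c) (g s - c) (Icc p q) s := fun s hs ↦ by
    simpa using ((hf s hs).sub_const (f p)).fun_sub
      ((((hasDerivAt_id s).sub_const p).mul_const c).hasDerivWithinAt)
  refine image_norm_le_of_norm_deriv_right_le_deriv_boundary
    (fun s hs ↦ (hderiv s hs).continuousWithinAt)
    (fun s hs ↦ (hderiv s (Ico_subset_Icc_self hs)).mono_of_mem_nhdsWithin
      (Icc_mem_nhdsGE_of_mem hs))
    (by simp [hBp]) hB (fun s hs ↦ hbound s (Ico_subset_Icc_self hs)) ⟨hpq, le_rfl⟩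

lemma abs_sub_sub_mul_deriv_left_le {f g : ℝ → ℝ} {p q M : ℝ} (hpq : p ≤ q)
    (hf : ∀ s ∈ Icc p q, HasDerivWithinAt f (g s) (Icc p q) s)
    (hg : ∀ s ∈ Icc p q, |g s - g p| ≤ M * (s - p)) :
    |f q - f p - (q - p) * g p| ≤ M * (q - p) ^ 2 / 2 :=
  abs_sub_sub_mul_le_of_deriv_boundary (B := fun s ↦ M * (s - p) ^ 2 / 2)
    (B' := fun s ↦ M * (s - p)) hpq hf
    (fun s ↦ ((((hasDerivAt_id s).sub_const p).pow 2).const_mul M |>.div_const 2).congr_deriv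
      (by simp only [id_eq]; ring))
    (by ring) hg

lemma abs_sub_sub_mul_deriv_right_le {f g : ℝ → ℝ} {p q M : ℝ} (hpq : p ≤ q)
    (hf : ∀ s ∈ Icc p q, HasDerivWithinAt f (g s) (Icc p q) s)
    (hg : ∀ s ∈ Icc p q, |g s - g q| ≤ M * (q - s)) :
    |f q - f p - (q - p) * g q| ≤ M * (q - p) ^ 2 / 2 :=
  (abs_sub_sub_mul_le_of_deriv_boundary (B := fun s ↦ M * ((q - p) ^ 2 - (q - s) ^ 2) / 2)
    (B' := fun s ↦ M * (q - s)) hpq hf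
    (fun s ↦ (((((hasDerivAt_id s).const_sub q).pow 2).const_sub ((q - p) ^ 2)).const_mul M
      |>.div_const 2).congr_deriv (by simp only [id_eq]; ring))
    (by ring) hg).trans_eq (by ring)

lemma abs_sub_linear_interpolation_le {f g : ℝ → ℝ} {a b M u h : ℝ} (hab : a < b)
    (hf : ∀ s ∈ Icc a b, HasDerivWithinAt f (g s) (Icc a b) s)
    (hg : ∀ s ∈ Icc a b, ∀ r ∈ Icc a b, |g s - g r| ≤ M * |s - r|) (hu : u ∈ Icc a b)
    (hh : b - a ≤ h) :
    |f u - ((b - u) * f a + (u - a) * f b) / (b - a)| ≤ M * h ^ 2 / 8 := by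
  obtain ⟨hau, hub⟩ := hu
  have hba : 0 < b - a := sub_pos.mpr hab
  have hM : 0 ≤ M := nonneg_of_mul_nonneg_left
    ((abs_nonneg _).trans (hg a ⟨le_rfl, hab.le⟩ b ⟨hab.le, le_rfl⟩))
    (abs_pos.mpr (sub_ne_zero.mpr hab.ne))
  have hleft : |f u - f a - (u - a) * g u| ≤ M * (u - a) ^ 2 / 2 :=
    abs_sub_sub_mul_deriv_right_le hau
      (fun s hs ↦ (hf s ⟨hs.1, hs.2.trans hub⟩).mono (Icc_subset_Icc_right hub))
      fun s hs ↦ by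
        rw [← abs_of_nonneg (sub_nonneg.mpr hs.2), abs_sub_comm u]
        exact hg s ⟨hs.1, hs.2.trans hub⟩ u ⟨hau, hub⟩
  have hright : |f b - f u - (b - u) * g u| ≤ M * (b - u) ^ 2 / 2 :=
    abs_sub_sub_mul_deriv_left_le hub
      (fun s hs ↦ (hf s ⟨hau.trans hs.1, hs.2⟩).mono (Icc_subset_Icc_left hau))
      fun s hs ↦ by
        rw [← abs_of_nonneg (sub_nonneg.mpr hs.1)]
        exact hg s ⟨hau.trans hs.1, hs.2⟩ u ⟨hau, hub⟩
  have hsplit : f u - ((b - u) * f a + (u - a) * f b) / (b - a) =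
      ((b - u) * (f u - f a - (u - a) * g u) - (u - a) * (f b - f u - (b - u) * g u)) /
        (b - a) := by
    field_simp [hba.ne']
    ring
  rw [hsplit, abs_div, abs_of_pos hba, div_le_iff₀ hba]
  calc _ ≤ (b - u) * |f u - f a - (u - a) * g u| + (u - a) * |f b - f u - (b - u) * g u| := by
        refine (abs_sub _ _).trans_eq ?_
        rw [abs_mul, abs_mul, abs_of_nonneg (sub_nonneg.mpr hub),
          abs_of_nonneg (sub_nonneg.mpr hau)]
    _ ≤ (b - u) * (M * (u - a) ^ 2 / 2) + (u - a) * (M * (b - u) ^ 2 / 2) := by gcongr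
    _ ≤ M * (b - a) ^ 2 / 8 * (b - a) := by
        nlinarith [mul_nonneg (mul_nonneg hM (sq_nonneg (u - a - (b - u)))) hba.le]
    _ ≤ M * h ^ 2 / 8 * (b - a) := by gcongr

lemma exists_mem_Icc_succ_of_mem_Icc {t : ℕ → ℝ} {N : ℕ} (hN : 0 < N) {u : ℝ}
    (hu : u ∈ Icc (t 0) (t N)) : ∃ k < N, u ∈ Icc (t k) (t (k + 1)) := by
  induction N with
  | zero => omega
  | succ n ih =>
    by_cases h : u ≤ t n
    · rcases Nat.eq_zero_or_pos n with rfl | hn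
      · exact ⟨0, Nat.one_pos, hu⟩
      · obtain ⟨k, hk, huk⟩ := ih hn ⟨hu.1, h⟩
        exact ⟨k, by omega, huk⟩
    · exact ⟨n, by omega, (not_le.mp h).le, hu.2⟩

lemma abs_sub_linear_spline_le {N : ℕ} (hN : 0 < N) {t : ℕ → ℝ} {f S : ℝ → ℝ} {M h : ℝ}
    (hmono : ∀ k, k < N → t k < t (k + 1)) (hstep : ∀ k, k < N → t (k + 1) - t k ≤ h)
    (hf : ∀ k, k < N → ∃ g : ℝ → ℝ,
      (∀ u ∈ Icc (t k) (t (k + 1)), HasDerivWithinAt f (g u) (Icc (t k) (t (k + 1))) u) ∧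
      (∀ u ∈ Icc (t k) (t (k + 1)), ∀ v ∈ Icc (t k) (t (k + 1)), |g u - g v| ≤ M * |u - v|))
    (hS : ∀ k, k < N → ∀ u ∈ Icc (t k) (t (k + 1)),
      S u = ((t (k + 1) - u) * f (t k) + (u - t k) * f (t (k + 1))) / (t (k + 1) - t k))
    {u : ℝ} (hu : u ∈ Icc (t 0) (t N)) : |f u - S u| ≤ M * h ^ 2 / 8 := by
  obtain ⟨k, hk, huk⟩ := exists_mem_Icc_succ_of_mem_Icc hN hu
  obtain ⟨g, hgd, hgl⟩ := hf k hk
  rw [hS k hk u huk]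
  exact abs_sub_linear_interpolation_le (hmono k hk) hgd hgl huk (hstep k hk)

lemma sub_ne_zero_of_one_lt_abs {c u : ℝ} (hc : 1 < |c|) (hu : u ∈ Icc (-1 : ℝ) 1) : c - u ≠ 0 := by
  intro h
  have : |c| ≤ 1 := by rw [sub_eq_zero.mp h]; exact abs_le.mpr hu
  linarith

lemma one_sub_sq_moebius {c u : ℝ} (hcu : c - u ≠ 0) :
    1 - ((c * u - 1) / (c - u)) ^ 2 = (c ^ 2 - 1) * (1 - u ^ 2) / (c - u) ^ 2 := by
  field_simp
  ring

lemma hasDerivAt_arcsin_moebius {c u : ℝ} (hc : 1 < |c|) (hu : u ∈ Ioo (-1 : ℝ) 1) :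
    HasDerivAt (fun u ↦ arcsin ((c * u - 1) / (c - u)))
      (√(c ^ 2 - 1) * (|c - u| * √(1 - u ^ 2))⁻¹) u := by
  have hcu := sub_ne_zero_of_one_lt_abs hc (Ioo_subset_Icc_self hu)
  have hc2 : 0 < c ^ 2 - 1 := by nlinarith [sq_abs c]
  have hu2 : 0 < 1 - u ^ 2 := by nlinarith [hu.1, hu.2]
  have hinner : HasDerivAt (fun u ↦ (c * u - 1) / (c - u)) ((c ^ 2 - 1) / (c - u) ^ 2) u := by
    refine ((((hasDerivAt_id u).const_mul c).sub_const 1).div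
      ((hasDerivAt_id u).const_sub c) hcu).congr_deriv ?_
    simp only [id]
    field_simp
    ring
  have hsq : ((c * u - 1) / (c - u)) ^ 2 < 1 := by
    rw [← sub_pos, one_sub_sq_moebius hcu]; positivity
  refine ((hasDerivAt_arcsin (by nlinarith) (by nlinarith)).comp u hinner).congr_deriv ?_
  rw [one_sub_sq_moebius hcu, sqrt_div' _ (sq_nonneg _), sqrt_sq_eq_abs, sqrt_mul hc2.le]
  have hcu' := abs_pos.mpr hcu
  field_simp
  rw [sq_sqrt hc2.le, sq_abs]

lemma continuousOn_arcsin_moebius {c : ℝ} (hc : 1 < |c|) :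
    ContinuousOn (fun u ↦ arcsin ((c * u - 1) / (c - u))) (Icc (-1) 1) :=
  continuous_arcsin.comp_continuousOn <|
    ContinuousOn.div (by fun_prop) (by fun_prop) fun _ hu ↦ sub_ne_zero_of_one_lt_abs hc hu

lemma intervalIntegrable_inv_abs_sub_mul_sqrt_one_sub_sq {c : ℝ} (hc : 1 < |c|) :
    IntervalIntegrable (fun u ↦ (|c - u| * √(1 - u ^ 2))⁻¹) volume (-1) 1 := by
  have hsc : 0 < √(c ^ 2 - 1) := sqrt_pos.mpr (by nlinarith [sq_abs c])
  have hint : IntervalIntegrable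
      (fun u ↦ (√(c ^ 2 - 1))⁻¹ * (√(c ^ 2 - 1) * (|c - u| * √(1 - u ^ 2))⁻¹)) volume (-1) 1 :=
    (intervalIntegrable_deriv_of_nonneg (by simpa using continuousOn_arcsin_moebius hc)
      (fun u hu ↦ hasDerivAt_arcsin_moebius hc (by simpa using hu))
      fun u _ ↦ by positivity).const_mul _
  simpa only [inv_mul_cancel_left₀ hsc.ne'] using hint

lemma integral_inv_abs_sub_mul_sqrt_one_sub_sq {c : ℝ} (hc : 1 < |c|) :
    ∫ u in (-1 : ℝ)..1, (|c - u| * √(1 - u ^ 2))⁻¹ = π / √(c ^ 2 - 1) := by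
  have hsc : 0 < √(c ^ 2 - 1) := sqrt_pos.mpr (by nlinarith [sq_abs c])
  have hftc := integral_eq_sub_of_hasDerivAt_of_le (by norm_num) (continuousOn_arcsin_moebius hc)
    (fun u hu ↦ hasDerivAt_arcsin_moebius hc hu)
    ((intervalIntegrable_inv_abs_sub_mul_sqrt_one_sub_sq hc).const_mul _)
  have hone : (c * 1 - 1) / (c - 1) = 1 := by
    rw [mul_one]; exact div_self (sub_ne_zero_of_one_lt_abs hc (by norm_num))
  have hneg_one : (c * -1 - 1) / (c - -1) = -1 := by
    rw [div_eq_iff (sub_ne_zero_of_one_lt_abs hc (by norm_num))]; ring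
  rw [intervalIntegral.integral_const_mul, hone, hneg_one, arcsin_one, arcsin_neg_one] at hftc
  rw [eq_div_iff hsc.ne', mul_comm, hftc]
  ring

lemma abs_re_add_abs_im_le_sqrt_two_mul_norm (w : ℂ) : |w.re| + |w.im| ≤ √2 * ‖w‖ := by
  rw [Complex.norm_eq_sqrt_sq_add_sq, ← sqrt_mul zero_le_two, ← abs_of_nonneg (by positivity :
    0 ≤ |w.re| + |w.im|)]
  exact abs_le_sqrt (by nlinarith [sq_abs w.re, sq_abs w.im, sq_nonneg (|w.re| - |w.im|)])

lemma norm_sq_sub_one_le {z : ℂ} (hz : 1 ≤ |z.re|) :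
    ‖z ^ 2 - 1‖ ≤ (|z.re| + |z.im|) ^ 2 - 1 := by
  have hsub : ‖z - 1‖ ≤ |z.re - 1| + |z.im| := by
    simpa using Complex.norm_le_abs_re_add_abs_im (z - 1)
  have hadd : ‖z + 1‖ ≤ |z.re + 1| + |z.im| := by
    simpa using Complex.norm_le_abs_re_add_abs_im (z + 1)
  have hprod : (|z.re - 1| + |z.im|) * (|z.re + 1| + |z.im|) = (|z.re| + |z.im|) ^ 2 - 1 := by
    rcases le_abs'.mp hz with h | h
    · rw [abs_of_neg (by linarith : z.re - 1 < 0), abs_of_nonpos (by linarith : z.re + 1 ≤ 0),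
        abs_of_neg (by linarith : z.re < 0)]
      ring
    · rw [abs_of_nonneg (by linarith : 0 ≤ z.re - 1), abs_of_pos (by linarith : 0 < z.re + 1),
        abs_of_pos (by linarith : 0 < z.re)]
      ring
  calc ‖z ^ 2 - 1‖ = ‖z - 1‖ * ‖z + 1‖ := by rw [← norm_mul]; ring_nf
    _ ≤ (|z.re - 1| + |z.im|) * (|z.re + 1| + |z.im|) :=
      mul_le_mul hsub hadd (norm_nonneg _) (by positivity)
    _ = (|z.re| + |z.im|) ^ 2 - 1 := hprod

lemma norm_mul_one_sub_inv_sq_cpow_half {z : ℂ} (hz : z ≠ 0) :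
    ‖z * (1 - 1 / z ^ 2) ^ ((1 : ℂ) / 2)‖ = √‖z ^ 2 - 1‖ := by
  have hhalf : ((1 : ℂ) / 2) = ((1 / 2 : ℝ) : ℂ) := by norm_num
  rw [norm_mul, hhalf, Complex.norm_cpow_real, ← sqrt_eq_rpow, ← sqrt_sq (norm_nonneg z),
    ← sqrt_mul (sq_nonneg _), ← norm_pow, ← norm_mul, mul_one_sub, mul_one_div_cancel
    (pow_ne_zero 2 hz)]

lemma exists_abs_sub_eq_abs_sub_add {x y : ℝ} (hx : 1 < |x|) (hy : 0 ≤ y) :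
    ∃ c : ℝ, |c| = |x| + y ∧ ∀ u ∈ Icc (-1 : ℝ) 1, |c - u| = |x - u| + y := by
  rcases lt_abs.mp hx with h | h
  · refine ⟨x + y, by rw [abs_of_pos (by linarith), abs_of_pos (by linarith)], fun u hu ↦ ?_⟩
    rw [abs_of_pos (by linarith [hu.2]), abs_of_pos (by linarith [hu.2])]
    ring
  · refine ⟨x - y, by rw [abs_of_neg (by linarith), abs_of_neg (by linarith)]; ring,
      fun u hu ↦ ?_⟩
    rw [abs_of_neg (by linarith [hu.1]), abs_of_neg (by linarith [hu.1])]
    ring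

lemma norm_ofReal_div_sqrt_mul_sub_le {e E c u : ℝ} {z : ℂ} (he : |e| ≤ E) (hcu : 0 < |c - u|)
    (hcz : |c - u| ≤ √2 * ‖(u : ℂ) - z‖) :
    ‖(e : ℂ) / ((√(1 - u ^ 2) : ℂ) * ((u : ℂ) - z))‖ ≤ √2 * E * (|c - u| * √(1 - u ^ 2))⁻¹ := by
  have huz : 0 < ‖(u : ℂ) - z‖ := pos_of_mul_pos_right (hcu.trans_le hcz) (sqrt_nonneg 2)
  rw [norm_div, norm_mul, Complex.norm_real, Complex.norm_real, norm_of_nonneg (sqrt_nonneg _),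
    mul_comm, ← div_div, mul_inv, ← div_eq_mul_inv, ← mul_div_assoc, ← div_eq_mul_inv]
  gcongr ?_ / _
  rw [div_le_div_iff₀ huz hcu]
  calc ‖e‖ * |c - u| ≤ E * (√2 * ‖(u : ℂ) - z‖) := by
        rw [norm_eq_abs]; gcongr; exact (abs_nonneg e).trans he
    _ = √2 * E * ‖(u : ℂ) - z‖ := by ring

/-- The paper's `Φ(h, z)`. -/
noncomputable def chebyshevCauchyTransform (h : ℝ → ℝ) (z : ℂ) : ℂ :=
  -((z * (1 - 1 / z ^ 2) ^ ((1 : ℂ) / 2)) / (π : ℂ)) *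
    ∫ u in (-1 : ℝ)..1, (h u : ℂ) / ((√(1 - u ^ 2) : ℂ) * ((u : ℂ) - z))

lemma norm_chebyshevCauchyTransform_le {h : ℝ → ℝ} {E : ℝ}
    (hE : ∀ u ∈ Icc (-1 : ℝ) 1, |h u| ≤ E) {z : ℂ} (hz : 1 < |z.re|) :
    ‖chebyshevCauchyTransform h z‖ ≤ √2 * E := by
  obtain ⟨c, hc_abs, hc_sub⟩ := exists_abs_sub_eq_abs_sub_add hz (abs_nonneg z.im)
  have hc : 1 < |c| := by rw [hc_abs]; linarith [abs_nonneg z.im]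
  have hsc : 0 < √(c ^ 2 - 1) := sqrt_pos.mpr (by nlinarith [sq_abs c])
  have hz0 : z ≠ 0 := by rintro rfl; norm_num at hz
  have hprefactor : ‖z * (1 - 1 / z ^ 2) ^ ((1 : ℂ) / 2)‖ ≤ √(c ^ 2 - 1) := by
    rw [norm_mul_one_sub_inv_sq_cpow_half hz0, ← sq_abs c, hc_abs]
    exact sqrt_le_sqrt (norm_sq_sub_one_le hz.le)
  have hintegral : ‖∫ u in (-1 : ℝ)..1, (h u : ℂ) / ((√(1 - u ^ 2) : ℂ) * ((u : ℂ) - z))‖ ≤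
      √2 * E * (π / √(c ^ 2 - 1)) := by
    rw [← integral_inv_abs_sub_mul_sqrt_one_sub_sq hc, ← intervalIntegral.integral_const_mul]
    refine norm_integral_le_of_norm_le (by norm_num) (ae_of_all _ fun u hu ↦ ?_)
      ((intervalIntegrable_inv_abs_sub_mul_sqrt_one_sub_sq hc).const_mul _)
    have hu' : u ∈ Icc (-1 : ℝ) 1 := Ioc_subset_Icc_self hu
    refine norm_ofReal_div_sqrt_mul_sub_le (hE u hu')
      (abs_pos.mpr (sub_ne_zero_of_one_lt_abs hc hu')) ?_
    rw [hc_sub u hu', norm_sub_rev]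
    simpa using abs_re_add_abs_im_le_sqrt_two_mul_norm (z - u)
  calc ‖chebyshevCauchyTransform h z‖
      = ‖z * (1 - 1 / z ^ 2) ^ ((1 : ℂ) / 2)‖ / π *
          ‖∫ u in (-1 : ℝ)..1, (h u : ℂ) / ((√(1 - u ^ 2) : ℂ) * ((u : ℂ) - z))‖ := by
        rw [chebyshevCauchyTransform, norm_mul, norm_neg, norm_div, Complex.norm_real,
          norm_of_nonneg pi_pos.le]
    _ ≤ √(c ^ 2 - 1) / π * (√2 * E * (π / √(c ^ 2 - 1))) := by gcongr
    _ = √2 * E := by field_simp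

lemma sqrt_two_mul_div_eight_le_error_bound {N : ℕ} (hN : 3 ≤ N) {γ M : ℝ} (hγ : 0 < γ) :
    √2 * (M * (γ / N) ^ 2 / 8) ≤
      √(((γ ^ 2 * M / π) * (1 + π * √2 / (γ * log N)) * log N) ^ 2 +
        (M * γ ^ 2 / (8 * π)) ^ 2) / (N : ℝ) ^ 2 := by
  rcases le_or_gt M 0 with hM | hM
  · exact (mul_nonpos_of_nonneg_of_nonpos (sqrt_nonneg 2)
      (by have := sq_nonneg (γ / N); nlinarith)).trans (by positivity)
  have hlog : 1 ≤ log N := by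
    rw [le_log_iff_exp_le (by positivity)]
    have h3 : (3 : ℝ) ≤ N := by exact_mod_cast hN
    linarith [exp_one_lt_d9]
  have hsqrt2 : √2 * π ≤ 8 := by
    nlinarith [sq_sqrt (zero_le_two (α := ℝ)), sqrt_nonneg 2, pi_lt_d2, pi_pos]
  set A := (γ ^ 2 * M / π) * (1 + π * √2 / (γ * log N)) * log N
  have hA : A = γ ^ 2 * M / π * log N + √2 * γ * M := by
    simp only [A]; field_simp
  calc √2 * (M * (γ / N) ^ 2 / 8) = (√2 * π / 8) * (γ ^ 2 * M / π) / (N : ℝ) ^ 2 := by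
        field_simp
    _ ≤ 1 * (γ ^ 2 * M / π * log N + √2 * γ * M) / (N : ℝ) ^ 2 := by
        gcongr
        · linarith
        · nlinarith [mul_pos (mul_pos (sqrt_pos.mpr zero_lt_two) hγ) hM,
            (by positivity : 0 < γ ^ 2 * M / π)]
    _ ≤ √(A ^ 2 + (M * γ ^ 2 / (8 * π)) ^ 2) / (N : ℝ) ^ 2 := by
        rw [one_mul, ← hA]
        gcongr
        exact (le_abs_self A).trans (abs_le_sqrt (le_add_of_nonneg_right (sq_nonneg _)))

theorem quadrature_error_complex_CW2_table2_general
    (N : ℕ) (hN : 3 ≤ N)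
    (t : ℕ → ℝ) (ht0 : t 0 = -1) (htN : t N = 1)
    (hmono : ∀ k, k < N → t k < t (k + 1))
    (γ : ℝ) (hγ : 0 < γ)
    (hstep : ∀ k, k < N → t (k + 1) - t k ≤ γ / N)
    (f S : ℝ → ℝ) (M₂ : ℝ)
    (hf : ∀ k, k < N → ∃ g : ℝ → ℝ,
      (∀ u ∈ Set.Icc (t k) (t (k + 1)),
        HasDerivWithinAt f (g u) (Set.Icc (t k) (t (k + 1))) u) ∧
      (∀ u ∈ Set.Icc (t k) (t (k + 1)), ∀ v ∈ Set.Icc (t k) (t (k + 1)),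
        |g u - g v| ≤ M₂ * |u - v|))
    (hS : ∀ k, k < N → ∀ u ∈ Set.Icc (t k) (t (k + 1)),
      S u = ((t (k + 1) - u) * f (t k) + (u - t k) * f (t (k + 1))) / (t (k + 1) - t k))
    (z : ℂ) (hz : 1 < |z.re|) :
    ‖(-((z * (1 - 1 / z ^ 2) ^ ((1 : ℂ) / 2)) / (π : ℂ)) *
        ∫ u in (-1 : ℝ)..1,
          ((f u - S u : ℝ) : ℂ) / ((Real.sqrt (1 - u ^ 2) : ℂ) * ((u : ℂ) - z)))‖ ≤
      Real.sqrt (((γ ^ 2 * M₂ / π) * (1 + π * Real.sqrt 2 / (γ * Real.log N)) * Real.log N) ^ 2 + (M₂ * γ ^ 2 / (8 * π)) ^ 2) / (N : ℝ) ^ 2 := by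
  have hspline : ∀ u ∈ Icc (-1 : ℝ) 1, |(f - S) u| ≤ M₂ * (γ / N) ^ 2 / 8 := fun u hu ↦
    abs_sub_linear_spline_le (by omega) hmono hstep hf hS (by rwa [ht0, htN])
  exact (norm_chebyshevCauchyTransform_le hspline hz).trans
    (sqrt_two_mul_div_eight_le_error_bound hN hγ)

theorem quadrature_error_complex_CW2_table2
    (N : ℕ) (hN : 3 ≤ N)
    (t : ℕ → ℝ) (ht0 : t 0 = -1) (htN : t N = 1)
    (hmono : ∀ k, k < N → t k < t (k + 1))
    (γ : ℝ) (hγ : 0 < γ)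
    (hstep : ∀ k, k < N → t (k + 1) - t k ≤ γ / N)
    (f S : ℝ → ℝ) (M₂ : ℝ)
    (hfc : ContinuousOn f (Set.Icc (-1 : ℝ) 1))
    (hf : ∀ k, k < N → ∃ g : ℝ → ℝ,
      (∀ u ∈ Set.Icc (t k) (t (k + 1)),
        HasDerivWithinAt f (g u) (Set.Icc (t k) (t (k + 1))) u) ∧
      (∀ u ∈ Set.Icc (t k) (t (k + 1)), ∀ v ∈ Set.Icc (t k) (t (k + 1)),
        |g u - g v| ≤ M₂ * |u - v|))
    (hS : ∀ k, k < N → ∀ u ∈ Set.Icc (t k) (t (k + 1)),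
      S u = ((t (k + 1) - u) * f (t k) + (u - t k) * f (t (k + 1))) / (t (k + 1) - t k))
    (z : ℂ) (hz : 1 < |z.re|) :
    ‖(-((z * (1 - 1 / z ^ 2) ^ ((1 : ℂ) / 2)) / (π : ℂ)) *
        ∫ u in (-1 : ℝ)..1,
          ((f u - S u : ℝ) : ℂ) / ((Real.sqrt (1 - u ^ 2) : ℂ) * ((u : ℂ) - z)))‖ ≤
      Real.sqrt (((γ ^ 2 * M₂ / π) * (1 + π * Real.sqrt 2 / (γ * Real.log N)) * Real.log N) ^ 2 + (M₂ * γ ^ 2 / (8 * π)) ^ 2) / (N : ℝ) ^ 2 :=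
  quadrature_error_complex_CW2_table2_general N hN t ht0 htN hmono γ hγ hstep f S M₂ hf hS z hz
end

section
/- Let f belong to CW²_Δ[−1,1] with constant M₂, let h = max_{0≤k≤N−1} h_k, and let r_N = S_N − f be the spline interpolation error. Then r_N satisfies the Lipschitz condition |r_N(t) − r_N(t′)| ≤ M₂·h·|t − t′| for all t, t′ ∈ [−1,1]. -/
/-!
On each grid cell `[t k, t (k+1)]` the error `S - f` has derivative `slope - f'`, and by the mean
value theorem the slope of the chord is itself a value `f' ξ` of the derivative in that cell, so the
Lipschitz bound on `f'` makes the derivative of the error at most `M₂ h_k ≤ M₂ h`. The cellwise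
Lipschitz bounds then glue across the nodes by the triangle inequality.
-/

open Set NNReal

section Gluing

variable {E : Type*} [PseudoMetricSpace E] {f : ℝ → E} {K : ℝ≥0}

theorem LipschitzOnWith.Icc_union_Icc {a b c : ℝ} (hab : LipschitzOnWith K f (Icc a b))
    (hbc : LipschitzOnWith K f (Icc b c)) : LipschitzOnWith K f (Icc a c) := by
  have across : ∀ x ∈ Icc a b, ∀ y ∈ Icc b c, dist (f x) (f y) ≤ K * dist x y := by
    intro x hx y hy
    calc dist (f x) (f y) ≤ dist (f x) (f b) + dist (f b) (f y) := dist_triangle _ _ _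
      _ ≤ K * dist x b + K * dist b y :=
        add_le_add (hab.dist_le_mul x hx b ⟨hx.1.trans hx.2, le_rfl⟩)
          (hbc.dist_le_mul b ⟨le_rfl, hy.1.trans hy.2⟩ y hy)
      _ = K * dist x y := by
        simp only [Real.dist_eq]
        rw [abs_of_nonpos (sub_nonpos.2 hx.2), abs_of_nonpos (sub_nonpos.2 hy.1),
          abs_of_nonpos (sub_nonpos.2 (hx.2.trans hy.1))]
        ring
  refine .of_dist_le_mul fun x hx y hy => ?_
  rcases le_total x b with hxb | hbx <;> rcases le_total y b with hyb | hby
  · exact hab.dist_le_mul x ⟨hx.1, hxb⟩ y ⟨hy.1, hyb⟩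
  · exact across x ⟨hx.1, hxb⟩ y ⟨hby, hy.2⟩
  · rw [dist_comm, dist_comm x]
    exact across y ⟨hy.1, hyb⟩ x ⟨hbx, hx.2⟩
  · exact hbc.dist_le_mul x ⟨hbx, hx.2⟩ y ⟨hby, hy.2⟩

theorem LipschitzOnWith.Icc_of_forall_Icc_succ {t : ℕ → ℝ} {N : ℕ}
    (h : ∀ k < N, LipschitzOnWith K f (Icc (t k) (t (k + 1)))) :
    LipschitzOnWith K f (Icc (t 0) (t N)) := by
  induction N with
  | zero =>
    refine .of_dist_le_mul fun x hx y hy => ?_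
    rw [subsingleton_Icc_of_ge le_rfl hx hy, dist_self, dist_self, mul_zero]
  | succ n ih => exact (ih fun k hk => h k (by omega)).Icc_union_Icc (h n (by omega))

end Gluing

section Interpolation

variable {f g S : ℝ → ℝ} {a b : ℝ}

theorem hasDerivAt_linearInterpolant (f : ℝ → ℝ) (a b x : ℝ) :
    HasDerivAt (fun x => ((b - x) * f a + (x - a) * f b) / (b - a))
      ((f b - f a) / (b - a)) x := by
  have h : HasDerivAt (fun y => (b - y) * f a + (y - a) * f b) (-1 * f a + 1 * f b) x :=
    (((hasDerivAt_id x).const_sub b).mul_const (f a)).add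
      (((hasDerivAt_id x).sub_const a).mul_const (f b))
  exact (h.div_const (b - a)).congr_deriv (by ring)

theorem abs_slope_sub_le_of_lipschitzOnWith_deriv {M : ℝ≥0} (hab : a < b)
    (hf : ∀ x ∈ Icc a b, HasDerivWithinAt f (g x) (Icc a b) x)
    (hg : LipschitzOnWith M g (Icc a b)) {x : ℝ} (hx : x ∈ Icc a b) :
    |(f b - f a) / (b - a) - g x| ≤ M * (b - a) := by
  obtain ⟨ξ, hξ, hgξ⟩ := exists_hasDerivAt_eq_slope f g hab
    (fun y hy => (hf y hy).continuousWithinAt)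
    (fun y hy => (hf y (Ioo_subset_Icc_self hy)).hasDerivAt (Icc_mem_nhds hy.1 hy.2))
  rw [← hgξ, ← Real.dist_eq]
  calc dist (g ξ) (g x) ≤ M * dist ξ x := hg.dist_le_mul ξ (Ioo_subset_Icc_self hξ) x hx
    _ ≤ M * (b - a) := by
      gcongr
      exact Real.dist_le_of_mem_Icc (Ioo_subset_Icc_self hξ) hx

theorem lipschitzOnWith_sub_of_eqOn_linearInterpolant {M : ℝ≥0} (hab : a < b)
    (hS : EqOn S (fun x => ((b - x) * f a + (x - a) * f b) / (b - a)) (Icc a b))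
    (hf : ∀ x ∈ Icc a b, HasDerivWithinAt f (g x) (Icc a b) x)
    (hg : LipschitzOnWith M g (Icc a b)) :
    LipschitzOnWith (M * (b - a).toNNReal) (S - f) (Icc a b) := by
  refine (convex_Icc a b).lipschitzOnWith_of_nnnorm_hasDerivWithin_le
    (f' := fun x => (f b - f a) / (b - a) - g x)
    (fun x hx => (((hasDerivAt_linearInterpolant f a b x).hasDerivWithinAt.congr hS
      (hS hx)).sub (hf x hx))) fun x hx => ?_
  rw [← NNReal.coe_le_coe, coe_nnnorm, Real.norm_eq_abs, NNReal.coe_mul,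
    Real.coe_toNNReal _ (sub_nonneg.2 hab.le)]
  exact abs_slope_sub_le_of_lipschitzOnWith_deriv hab hf hg hx

end Interpolation

theorem spline_remainder_lipschitz_CW2
    (N : ℕ) (hN : 1 ≤ N)
    (t : ℕ → ℝ) (ht0 : t 0 = -1) (htN : t N = 1)
    (hmono : ∀ k, k < N → t k < t (k + 1))
    (f S : ℝ → ℝ) (M₂ : ℝ)
    (hf : ∀ k, k < N → ∃ g : ℝ → ℝ,
      (∀ u ∈ Set.Icc (t k) (t (k + 1)),
        HasDerivWithinAt f (g u) (Set.Icc (t k) (t (k + 1))) u) ∧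
      (∀ u ∈ Set.Icc (t k) (t (k + 1)), ∀ v ∈ Set.Icc (t k) (t (k + 1)),
        |g u - g v| ≤ M₂ * |u - v|))
    (hS : ∀ k, k < N → ∀ u ∈ Set.Icc (t k) (t (k + 1)),
      S u = ((t (k + 1) - u) * f (t k) + (u - t k) * f (t (k + 1))) / (t (k + 1) - t k))
    (h : ℝ)
    (hmax : h = (Finset.range N).sup' (Finset.nonempty_range_iff.mpr (by omega))
      (fun k => t (k + 1) - t k))
    (u : ℝ) (hu : u ∈ Set.Icc (-1 : ℝ) 1) (v : ℝ) (hv : v ∈ Set.Icc (-1 : ℝ) 1) :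
    |(S u - f u) - (S v - f v)| ≤ M₂ * h * |u - v| := by
  have hstep : ∀ k < N, t (k + 1) - t k ≤ h := fun k hk =>
    hmax ▸ Finset.le_sup' (fun k => t (k + 1) - t k) (Finset.mem_range.2 hk)
  have hh : 0 ≤ h := (sub_nonneg.2 (hmono 0 hN).le).trans (hstep 0 hN)
  have hM₂ : 0 ≤ M₂ := by
    obtain ⟨g, -, hg⟩ := hf 0 hN
    have hcell := hmono 0 hN
    refine le_of_mul_le_mul_right ?_ (abs_pos.2 (sub_ne_zero.2 hcell.ne))
    rw [zero_mul]
    exact (abs_nonneg _).trans (hg _ ⟨le_rfl, hcell.le⟩ _ ⟨hcell.le, le_rfl⟩)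
  have hcells : ∀ k < N, LipschitzOnWith (M₂.toNNReal * h.toNNReal) (S - f)
      (Icc (t k) (t (k + 1))) := by
    intro k hk
    obtain ⟨g, hfg, hg⟩ := hf k hk
    exact (lipschitzOnWith_sub_of_eqOn_linearInterpolant (hmono k hk) (hS k hk) hfg
      (.of_dist_le' hg)).weaken (by gcongr; exact hstep k hk)
  have hlip := LipschitzOnWith.Icc_of_forall_Icc_succ hcells
  rw [ht0, htN] at hlip
  simpa only [Real.dist_eq, Pi.sub_apply, NNReal.coe_mul, Real.coe_toNNReal _ hM₂, Real.coe_toNNReal _ hh]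
    using hlip.dist_le_mul u hu v hv
end
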